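/- Let k be a perfect field of characteristic p > 0 and let S be a finite-dimensional commutative k-algebra. Then: (i) the intersection S' := ⋂_{n∈ℕ} S^{p^n}, where S^{p^n} = {s^{p^n} : s ∈ S}, is a k-subalgebra of S on which the Frobenius endomorphism s ↦ s^p is bijective; (ii) as a k-vector space, S is the internal direct sum of S' and the nilradical of S; (iii) the map sending a sequence (s_n)_{n∈ℕ} ∈ S^ℕ satisfying s_{n+1}^p = s_n for all n to its zeroth term s₀ is a bijection from the tilt S^♭ := lim_{s↦s^p} S onto S'. -/

import Mathlib

/-!
Since `k` is perfect, the images `S^{p^n}` form a descending chain of `k`-subalgebras, which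
stabilizes because `S` is finite-dimensional; hence `S' = S^{p^N}` for large `N`, and every
element of `S'` has a `p^n`-th root in `S'`. A nilpotent element lying in every `S^{p^n}` is zero:
if `(nil S)^m = 0` it is a `p^m`-th power of a nilpotent element, and `m ≤ p^m`. This gives
injectivity of Frobenius on `S'`, `S' ∩ nil S = 0`, and injectivity of `(sₙ) ↦ s₀`, as the
differences of two compatible sequences with the same zeroth term are such elements. Finally,
writing `x^{p^N} = t^{p^N}` with `t ∈ S'` exhibits `x - t` as nilpotent.
-/

open Function

theorem pow_pow_eq_of_forall_pow_succ_eq {M : Type*} [Monoid M] {p : ℕ} {f : ℕ → M}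
    (hf : ∀ n, f (n + 1) ^ p = f n) (n j : ℕ) : f (n + j) ^ p ^ j = f n := by
  induction j with
  | zero => simp
  | succ j ih => rw [pow_succ', pow_mul, ← add_assoc, hf, ih]

theorem Set.SurjOn.exists_backward_orbit {α : Type*} {g : α → α} {s : Set α}
    (hg : Set.SurjOn g s s) {a : α} (ha : a ∈ s) :
    ∃ f : ℕ → α, (∀ n, g (f (n + 1)) = f n) ∧ f 0 = a := by
  choose inv hinv_mem hinv using fun x : s => hg x.2
  let step : s → s := fun x => ⟨inv x, hinv_mem x⟩
  refine ⟨fun n => step^[n] ⟨a, ha⟩, fun n => ?_, rfl⟩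
  dsimp only
  rw [iterate_succ_apply']
  exact hinv _

theorem IsNilpotent.eq_zero_of_forall_exists_pow_eq {R : Type*} [CommSemiring R]
    [IsNoetherianRing R] {p : ℕ} (hp : 1 < p) {x : R} (hx : IsNilpotent x)
    (hroot : ∀ n, ∃ y, y ^ p ^ n = x) : x = 0 := by
  obtain ⟨m, hm⟩ := IsNoetherianRing.isNilpotent_nilradical R
  obtain ⟨y, rfl⟩ := hroot m
  exact Ideal.pow_eq_zero_of_mem hm (Nat.lt_pow_self hp).le (mem_nilradical.2 hx.of_pow)

section Tilt

variable {S : Type*} [CommRing S] {p : ℕ} [Fact p.Prime] [ExpChar S p] [IsNoetherianRing S]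

theorem eq_of_forall_pow_succ_eq_of_apply_zero_eq {f g : ℕ → S}
    (hf : ∀ n, f (n + 1) ^ p = f n) (hg : ∀ n, g (n + 1) ^ p = g n) (h0 : f 0 = g 0) :
    f = g := by
  funext n
  rw [← sub_eq_zero]
  refine IsNilpotent.eq_zero_of_forall_exists_pow_eq (Fact.out : p.Prime).one_lt
    ⟨p ^ n, ?_⟩ fun j => ⟨f (n + j) - g (n + j), ?_⟩
  · have hf0 : f n ^ p ^ n = f 0 := by simpa using pow_pow_eq_of_forall_pow_succ_eq hf 0 n
    have hg0 : g n ^ p ^ n = g 0 := by simpa using pow_pow_eq_of_forall_pow_succ_eq hg 0 n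
    rw [sub_pow_expChar_pow, hf0, hg0, h0, sub_self]
  · rw [sub_pow_expChar_pow, pow_pow_eq_of_forall_pow_succ_eq hf,
      pow_pow_eq_of_forall_pow_succ_eq hg]

end Tilt

section PerfectPart

variable (k : Type*) [CommRing k] (p : ℕ) [ExpChar k p] [PerfectRing k p]
  (S : Type*) [CommRing S] [Algebra k S] [ExpChar S p]

def frobRange (n : ℕ) : Subalgebra k S where
  toSubsemiring := (iterateFrobenius S p n).rangeS
  algebraMap_mem' c := by
    obtain ⟨d, rfl⟩ := (bijective_iterateFrobenius k p n).2 c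
    exact ⟨algebraMap k S d, ((algebraMap k S).map_iterateFrobenius p d n).symm⟩

theorem coe_frobRange (n : ℕ) :
    (frobRange k p S n : Set S) = Set.range fun s : S => s ^ p ^ n :=
  rfl

theorem frobRange_antitone : Antitone (frobRange k p S) := by
  refine antitone_nat_of_succ_le fun n => ?_
  rintro _ ⟨y, rfl⟩
  exact ⟨y ^ p, by rw [iterateFrobenius_def, iterateFrobenius_def, ← pow_mul, ← pow_succ']⟩

theorem exists_forall_ge_frobRange_eq [IsArtinian k S] :
    ∃ N, ∀ n, N ≤ n → frobRange k p S n = frobRange k p S N := by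
  obtain ⟨N, hN⟩ := IsArtinian.monotone_stabilizes
    ⟨fun n => OrderDual.toDual (Subalgebra.toSubmodule (frobRange k p S n)),
      fun _ _ h => Subalgebra.toSubmodule.monotone (frobRange_antitone k p S h)⟩
  exact ⟨N, fun n hn => (Subalgebra.toSubmodule.injective (hN n hn)).symm⟩

def perfectPart : Subalgebra k S :=
  ⨅ n, frobRange k p S n

theorem coe_perfectPart :
    (perfectPart k p S : Set S) = ⋂ n : ℕ, Set.range fun s : S => s ^ p ^ n :=
  Algebra.coe_iInf

variable {k p S}

theorem mem_perfectPart {x : S} : x ∈ perfectPart k p S ↔ ∀ n, ∃ y, y ^ p ^ n = x := by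
  simp only [← SetLike.mem_coe, coe_perfectPart, Set.mem_iInter, Set.mem_range]

theorem apply_zero_mem_perfectPart {f : ℕ → S} (hf : ∀ n, f (n + 1) ^ p = f n) :
    f 0 ∈ perfectPart k p S :=
  mem_perfectPart.2 fun n => ⟨f n, by simpa using pow_pow_eq_of_forall_pow_succ_eq hf 0 n⟩

theorem eq_zero_of_mem_perfectPart_of_isNilpotent [Fact p.Prime] [IsNoetherianRing S] {x : S}
    (hx : x ∈ perfectPart k p S) (hnil : IsNilpotent x) : x = 0 :=
  hnil.eq_zero_of_forall_exists_pow_eq (Fact.out : p.Prime).one_lt (mem_perfectPart.1 hx)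

variable (k p S)

theorem exists_perfectPart_eq_frobRange [IsArtinian k S] :
    ∃ N, ∀ n, N ≤ n → perfectPart k p S = frobRange k p S n := by
  obtain ⟨N, hN⟩ := exists_forall_ge_frobRange_eq k p S
  have hstable : perfectPart k p S = frobRange k p S N :=
    le_antisymm (iInf_le _ N) <| le_iInf fun m =>
      (le_total m N).elim (fun h => frobRange_antitone k p S h) fun h => (hN m h).ge
  exact ⟨N, fun n hn => hstable.trans (hN n hn).symm⟩

variable {k p S}

theorem exists_mem_perfectPart_pow_eq [IsArtinian k S] {x : S} (hx : x ∈ perfectPart k p S)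
    (n : ℕ) : ∃ y ∈ perfectPart k p S, y ^ p ^ n = x := by
  obtain ⟨N, hN⟩ := exists_perfectPart_eq_frobRange k p S
  rw [hN (N + n) (Nat.le_add_right N n)] at hx
  obtain ⟨z, rfl⟩ := hx
  refine ⟨z ^ p ^ N, ?_, ?_⟩
  · rw [hN N le_rfl]
    exact ⟨z, rfl⟩
  · rw [iterateFrobenius_def, ← pow_mul, ← pow_add]

variable (k p S)

theorem bijOn_pow_perfectPart [Fact p.Prime] [IsNoetherianRing S] [IsArtinian k S] :
    Set.BijOn (fun s : S => s ^ p) (perfectPart k p S) (perfectPart k p S) := by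
  refine ⟨fun x hx => pow_mem hx p, fun x hx y hy hxy => ?_, fun x hx => ?_⟩
  · have hsub : (x - y) ^ p = 0 := by rw [sub_pow_expChar, show x ^ p = y ^ p from hxy, sub_self]
    exact sub_eq_zero.1 (eq_zero_of_mem_perfectPart_of_isNilpotent (sub_mem hx hy) ⟨p, hsub⟩)
  · obtain ⟨y, hy, hyx⟩ := exists_mem_perfectPart_pow_eq hx 1
    exact ⟨y, hy, by simpa using hyx⟩

theorem isCompl_perfectPart_nilradical [Fact p.Prime] [IsNoetherianRing S] [IsArtinian k S] :
    IsCompl (Subalgebra.toSubmodule (perfectPart k p S))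
      ((nilradical S).restrictScalars k) := by
  constructor
  · rw [Submodule.disjoint_def]
    exact fun x hx hnil => eq_zero_of_mem_perfectPart_of_isNilpotent hx (mem_nilradical.1 hnil)
  · rw [codisjoint_iff, eq_top_iff]
    intro x _
    obtain ⟨N, hN⟩ := exists_perfectPart_eq_frobRange k p S
    have hxN : x ^ p ^ N ∈ perfectPart k p S := by
      rw [hN N le_rfl]
      exact ⟨x, rfl⟩
    obtain ⟨t, ht, htx⟩ := exists_mem_perfectPart_pow_eq hxN N
    have hnil : x - t ∈ nilradical S :=
      mem_nilradical.2 ⟨p ^ N, by rw [sub_pow_expChar_pow, htx, sub_self]⟩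
    exact Submodule.mem_sup.2 ⟨t, ht, x - t, hnil, add_sub_cancel t x⟩

end PerfectPart

theorem stmt_14 (p : ℕ) [Fact p.Prime] (k : Type*) [Field k] [CharP k p] [PerfectRing k p]
    (S : Type*) [CommRing S] [Algebra k S] [FiniteDimensional k S] :
    ∃ T : Subalgebra k S,
      (T : Set S) = (⋂ n : ℕ, Set.range fun s : S => s ^ p ^ n) ∧
      Set.BijOn (fun s : S => s ^ p) (T : Set S) (T : Set S) ∧
      IsCompl (Subalgebra.toSubmodule T) (Submodule.restrictScalars k (nilradical S)) ∧
      Function.Injective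
        (fun f : {f : ℕ → S // ∀ n, (f (n + 1)) ^ p = f n} => f.1 0) ∧
      Set.range (fun f : {f : ℕ → S // ∀ n, (f (n + 1)) ^ p = f n} => f.1 0)
        = (T : Set S) := by
  rcases subsingleton_or_nontrivial S with _ | _
  · refine ⟨⊤, ?_, ?_, ?_, injective_of_subsingleton _, ?_⟩ <;>
      simp [Set.eq_univ_of_forall, Subsingleton.elim _ (0 : S), bijective_of_subsingleton,
        isCompl_top_bot]
  have : CharP S p := charP_of_injective_algebraMap' k p
  have : IsNoetherianRing S := isNoetherian_of_tower k inferInstance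
  refine ⟨perfectPart k p S, coe_perfectPart k p S, bijOn_pow_perfectPart k p S,
    isCompl_perfectPart_nilradical k p S,
    fun f g h => Subtype.ext (eq_of_forall_pow_succ_eq_of_apply_zero_eq f.2 g.2 h),
    Set.Subset.antisymm (Set.range_subset_iff.2 fun f => apply_zero_mem_perfectPart f.2)
      fun x hx => ?_⟩
  obtain ⟨f, hf, rfl⟩ := (bijOn_pow_perfectPart k p S).surjOn.exists_backward_orbit hx
  exact ⟨⟨f, hf⟩, rfl⟩
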